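/- arXiv:2401.10738 — 2 statements merged into one kernel-verified Lean document; each statement's English description precedes it below -/
import Mathlib

section
/- Let (x*, y*, w*, z*, s*) be an extreme point of P = conv(Q) and let t ∈ {1, …, T} be a time period with Σ_{v∈𝒱} y*_{v,t} = s*_{t−1} (where s*_0 = s₀). Then at most one vendor v ∈ 𝒱 has a purchase quantity x*_{v,t} not belonging to {0, L^x_{v,t}, U^x_{v,t}}. -/
open scoped BigOperators

/-- A point of the warehouse problem: purchases `x`, sales `y`,
purchase indicators `w`, sale indicators `z` (all indexed by vendor and time),
and stock levels `s` (indexed by time). -/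
abbrev WPoint (V T : ℕ) :=
  (Fin V → Fin T → ℝ) × (Fin V → Fin T → ℝ) × (Fin V → Fin T → ℝ) ×
    (Fin V → Fin T → ℝ) × (Fin T → ℝ)

namespace WPoint

variable {V T : ℕ}

def x (p : WPoint V T) : Fin V → Fin T → ℝ := p.1
def y (p : WPoint V T) : Fin V → Fin T → ℝ := p.2.1
def w (p : WPoint V T) : Fin V → Fin T → ℝ := p.2.2.1
def z (p : WPoint V T) : Fin V → Fin T → ℝ := p.2.2.2.1
def s (p : WPoint V T) : Fin T → ℝ := p.2.2.2.2

end WPoint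

/-- A selector of one of the `x`/`y` decision variables. -/
structure WVar (V T : ℕ) where
  isX : Bool
  v : Fin V
  t : Fin T

/-- The value of the selected variable. -/
def WVar.val {V T : ℕ} (x y : Fin V → Fin T → ℝ) (u : WVar V T) : ℝ :=
  if u.isX then x u.v u.t else y u.v u.t

/-- The lower bound of the selected variable. -/
def WVar.lb {V T : ℕ} (Lx Ly : Fin V → Fin T → ℝ) (u : WVar V T) : ℝ :=
  if u.isX then Lx u.v u.t else Ly u.v u.t

/-- The upper bound of the selected variable. -/
def WVar.ub {V T : ℕ} (Ux Uy : Fin V → Fin T → ℝ) (u : WVar V T) : ℝ :=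
  if u.isX then Ux u.v u.t else Uy u.v u.t

/-- A generalized complementarity constraint `(V₁ - B₁)(V₂ - B₂) = 0`. -/
structure CompCon (V T : ℕ) where
  V1 : WVar V T
  V2 : WVar V T
  B1 : ℝ
  B2 : ℝ

/-- Validity of a complementarity tuple: the time index of `V₁` is at most that of `V₂`,
and each constant is zero or the lower or upper bound of the corresponding variable. -/
def ValidCompCon {V T : ℕ} (Lx Ux Ly Uy : Fin V → Fin T → ℝ) (c : CompCon V T) : Prop :=
  c.V1.t ≤ c.V2.t ∧
  (c.B1 = 0 ∨ c.B1 = c.V1.lb Lx Ly ∨ c.B1 = c.V1.ub Ux Uy) ∧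
  (c.B2 = 0 ∨ c.B2 = c.V2.lb Lx Ly ∨ c.B2 = c.V2.ub Ux Uy)

/-- The stock level at the end of period `t - 1` (the initial stock `s0` when `t = 1`). -/
def prevStock {T : ℕ} (s0 : ℝ) (s : Fin T → ℝ) (t : Fin T) : ℝ :=
  if _ : (t : ℕ) = 0 then s0 else s ⟨(t : ℕ) - 1, lt_of_le_of_lt (Nat.sub_le _ _) t.isLt⟩

/-- The feasible region `Q` of the warehouse problem. -/
def Qset {V T : ℕ} (s0 : ℝ) (Ls Us : Fin T → ℝ) (Lx Ux Ly Uy : Fin V → Fin T → ℝ)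
    (C : Finset (CompCon V T)) : Set (WPoint V T) :=
  { p | (∀ t, p.s t = prevStock s0 p.s t - ∑ v, p.y v t + ∑ v, p.x v t) ∧
        (∀ t, Ls t ≤ p.s t ∧ p.s t ≤ Us t) ∧
        (∀ t, ∑ v, p.y v t ≤ prevStock s0 p.s t) ∧
        (∀ c ∈ C, (c.V1.val p.x p.y - c.B1) * (c.V2.val p.x p.y - c.B2) = 0) ∧
        (∀ v t, Ly v t * p.z v t ≤ p.y v t ∧ p.y v t ≤ Uy v t * p.z v t) ∧
        (∀ v t, Lx v t * p.w v t ≤ p.x v t ∧ p.x v t ≤ Ux v t * p.w v t) ∧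
        (∀ v t, p.w v t = 0 ∨ p.w v t = 1) ∧
        (∀ v t, p.z v t = 0 ∨ p.z v t = 1) }

/-- The set `S` of candidate extreme stock levels. -/
def Sset {V T : ℕ} (s0 : ℝ) (Ls Us : Fin T → ℝ) (Lx Ux Ly Uy : Fin V → Fin T → ℝ) :
    Set ℝ :=
  { r | ∃ (K : ℝ) (lam : Fin 4 → Fin V → Fin T → ℝ),
      (K = 0 ∨ K = s0 ∨ (∃ t, K = Ls t) ∨ (∃ t, K = Us t)) ∧
      (∀ j v t, lam j v t = -1 ∨ lam j v t = 0 ∨ lam j v t = 1) ∧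
      r = K - ∑ t, ∑ v,
        (lam 0 v t * Ly v t + lam 1 v t * Uy v t + lam 2 v t * Lx v t + lam 3 v t * Ux v t) }

/-!
If two vendors `a ≠ b` both had a fractional purchase at time `t`, moving a small amount `ε` of
purchase from `b` to `a` at time `t` would leave every total `∑ v, x v t`, hence every stock
level, unchanged. Both indicators are `1`, so the purchases stay within their bounds, and every
variable sitting at `0` or at one of its bounds is untouched, so every complementarity constraint
still holds. Hence `p ± ε • d ∈ Q` for the nonzero direction `d = purchaseTransfer a b t`, so
`p` is the midpoint of two distinct points of `conv Q`.
-/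

open Filter Topology Set

theorem eq_zero_of_add_mem_of_sub_mem_of_mem_extremePoints {𝕜 E : Type*} [Field 𝕜] [LinearOrder 𝕜]
    [IsStrictOrderedRing 𝕜] [AddCommGroup E] [Module 𝕜 E] {A : Set E} {x d : E}
    (hx : x ∈ A.extremePoints 𝕜) (hadd : x + d ∈ A) (hsub : x - d ∈ A) : d = 0 :=
  add_eq_left.mp (hx.2 hadd hsub (mem_openSegment_add_sub x d))

theorem Filter.Eventually.exists_ne_zero_and_neg {G : Type*} [AddGroup G] [TopologicalSpace G]
    [IsTopologicalAddGroup G] [(𝓝[{0}ᶜ] (0 : G)).NeBot] {P : G → Prop} (h : ∀ᶠ g in 𝓝 0, P g) :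
    ∃ g ≠ 0, P g ∧ P (-g) := by
  have hneg : ∀ᶠ g in 𝓝 (0 : G), P (-g) := by
    simpa using (continuous_neg.tendsto' (0 : G) 0 neg_zero).eventually h
  obtain ⟨g, hP, hg⟩ :=
    (((h.and hneg).filter_mono (nhdsWithin_le_nhds (s := {0}ᶜ))).and self_mem_nhdsWithin).exists
  exact ⟨g, hg, hP⟩

section

variable {V T : ℕ} {Lx Ux Ly Uy : Fin V → Fin T → ℝ}

theorem WVar.val_eq_of_agree {x x' y : Fin V → Fin T → ℝ}
    (hfix : ∀ v t, x v t ∈ ({0, Lx v t, Ux v t} : Set ℝ) → x' v t = x v t)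
    (u : WVar V T) {B : ℝ} (hB : B = 0 ∨ B = u.lb Lx Ly ∨ B = u.ub Ux Uy)
    (h : u.val x y = B) : u.val x' y = B := by
  rcases u with ⟨_ | _, v, t⟩
  · exact h
  · simp only [WVar.val, WVar.lb, WVar.ub, if_true] at h hB ⊢
    rw [hfix v t (by simpa [h] using hB), h]

theorem ValidCompCon.eq_zero_of_agree {c : CompCon V T} (hc : ValidCompCon Lx Ux Ly Uy c)
    {x x' y : Fin V → Fin T → ℝ}
    (hfix : ∀ v t, x v t ∈ ({0, Lx v t, Ux v t} : Set ℝ) → x' v t = x v t)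
    (h : (c.V1.val x y - c.B1) * (c.V2.val x y - c.B2) = 0) :
    (c.V1.val x' y - c.B1) * (c.V2.val x' y - c.B2) = 0 := by
  obtain ⟨-, hB1, hB2⟩ := hc
  rcases mul_eq_zero.mp h with h | h
  · rw [c.V1.val_eq_of_agree hfix hB1 (sub_eq_zero.mp h), sub_self, zero_mul]
  · rw [c.V2.val_eq_of_agree hfix hB2 (sub_eq_zero.mp h), sub_self, mul_zero]

variable {s0 : ℝ} {Ls Us : Fin T → ℝ} {C : Finset (CompCon V T)}

theorem mem_Qset_of_snd_eq (hC : ∀ c ∈ C, ValidCompCon Lx Ux Ly Uy c) {p q : WPoint V T}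
    (hp : p ∈ Qset s0 Ls Us Lx Ux Ly Uy C) (hq : q.2 = p.2)
    (hsum : ∀ t, ∑ v, q.x v t = ∑ v, p.x v t)
    (hbound : ∀ v t, Lx v t * p.w v t ≤ q.x v t ∧ q.x v t ≤ Ux v t * p.w v t)
    (hfix : ∀ v t, p.x v t ∈ ({0, Lx v t, Ux v t} : Set ℝ) → q.x v t = p.x v t) :
    q ∈ Qset s0 Ls Us Lx Ux Ly Uy C := by
  obtain ⟨hbal, hs, hy, hcomp, hyz, -, hw, hz⟩ := hp
  have hy' : q.y = p.y := congrArg (·.1) hq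
  have hw' : q.w = p.w := congrArg (·.2.1) hq
  have hz' : q.z = p.z := congrArg (·.2.2.1) hq
  have hs' : q.s = p.s := congrArg (·.2.2.2) hq
  simp only [Qset, Set.mem_ofPred_eq, hy', hw', hz', hs']
  exact ⟨fun t => hsum t ▸ hbal t, hs, hy, fun c hc => (hC c hc).eq_zero_of_agree hfix (hcomp c hc),
    hyz, hbound, hw, hz⟩

theorem w_eq_one_and_x_mem_Ioo_of_mem_Qset {p : WPoint V T} (hp : p ∈ Qset s0 Ls Us Lx Ux Ly Uy C)
    {v : Fin V} {t : Fin T} (hv : p.x v t ∉ ({0, Lx v t, Ux v t} : Set ℝ)) :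
    p.w v t = 1 ∧ p.x v t ∈ Ioo (Lx v t) (Ux v t) := by
  obtain ⟨-, -, -, -, -, hxw, hw, -⟩ := hp
  simp only [mem_insert_iff, mem_singleton_iff, not_or] at hv
  obtain ⟨hx0, hxL, hxU⟩ := hv
  have hw1 : p.w v t = 1 := (hw v t).resolve_left fun hw0 => hx0 <| by
    have := hxw v t
    rw [hw0, mul_zero, mul_zero] at this
    exact le_antisymm this.2 this.1
  have hbound := hxw v t
  rw [hw1, mul_one, mul_one] at hbound
  exact ⟨hw1, lt_of_le_of_ne hbound.1 (Ne.symm hxL), lt_of_le_of_ne hbound.2 hxU⟩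

def purchaseTransfer (a b : Fin V) (t : Fin T) : WPoint V T :=
  (Pi.single a (Pi.single t 1) - Pi.single b (Pi.single t 1), 0)

theorem purchaseTransfer_ne_zero {a b : Fin V} (hab : a ≠ b) (t : Fin T) :
    purchaseTransfer a b t ≠ 0 := fun h => by
  simpa [purchaseTransfer, hab] using congrFun (congrFun (congrArg Prod.fst h) a) t

theorem sum_purchaseTransfer (a b : Fin V) (t t' : Fin T) :
    ∑ v, (purchaseTransfer a b t).x v t' = 0 := by
  simp only [purchaseTransfer, WPoint.x, Pi.sub_apply, Finset.sum_sub_distrib,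
    ← Finset.sum_apply, Finset.sum_pi_single', Finset.mem_univ, if_true, sub_self]

theorem purchaseTransfer_x_left {a b : Fin V} (hab : a ≠ b) (t : Fin T) :
    (purchaseTransfer a b t).x a t = 1 := by
  simp [purchaseTransfer, WPoint.x, hab]

theorem purchaseTransfer_x_right {a b : Fin V} (hab : a ≠ b) (t : Fin T) :
    (purchaseTransfer a b t).x b t = -1 := by
  simp [purchaseTransfer, WPoint.x, hab.symm]

theorem eq_of_purchaseTransfer_x_ne_zero {a b v : Fin V} {t t' : Fin T}
    (h : (purchaseTransfer a b t).x v t' ≠ 0) : t' = t ∧ (v = a ∨ v = b) := by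
  by_contra hne
  refine h ?_
  simp only [purchaseTransfer, WPoint.x, Pi.sub_apply, Pi.single_apply]
  split_ifs <;> simp_all

theorem add_smul_purchaseTransfer_mem_Qset (hC : ∀ c ∈ C, ValidCompCon Lx Ux Ly Uy c)
    {p : WPoint V T} (hp : p ∈ Qset s0 Ls Us Lx Ux Ly Uy C) {a b : Fin V} (hab : a ≠ b) {t : Fin T}
    (ha : p.x a t ∉ ({0, Lx a t, Ux a t} : Set ℝ)) (hb : p.x b t ∉ ({0, Lx b t, Ux b t} : Set ℝ))
    {ε : ℝ} (hεa : p.x a t + ε ∈ Icc (Lx a t) (Ux a t))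
    (hεb : p.x b t - ε ∈ Icc (Lx b t) (Ux b t)) :
    p + ε • purchaseTransfer a b t ∈ Qset s0 Ls Us Lx Ux Ly Uy C := by
  have hx : ∀ v t', (p + ε • purchaseTransfer a b t).x v t' =
      p.x v t' + ε * (purchaseTransfer a b t).x v t' := fun _ _ => rfl
  refine mem_Qset_of_snd_eq hC hp (by simp [purchaseTransfer]) (fun t' => ?_) (fun v t' => ?_)
    (fun v t' hfix => ?_)
  · simp only [hx, Finset.sum_add_distrib, ← Finset.mul_sum, sum_purchaseTransfer, mul_zero,
      add_zero]
  · by_cases hD : (purchaseTransfer a b t).x v t' = 0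
    · obtain ⟨-, -, -, -, -, hxw, -⟩ := hp
      rw [hx, hD, mul_zero, add_zero]
      exact hxw v t'
    obtain ⟨rfl, rfl | rfl⟩ := eq_of_purchaseTransfer_x_ne_zero hD
    · rw [hx, purchaseTransfer_x_left hab, (w_eq_one_and_x_mem_Ioo_of_mem_Qset hp ha).1]
      simpa using hεa
    · rw [hx, purchaseTransfer_x_right hab, (w_eq_one_and_x_mem_Ioo_of_mem_Qset hp hb).1]
      simpa [← sub_eq_add_neg] using hεb
  · by_cases hD : (purchaseTransfer a b t).x v t' = 0
    · rw [hx, hD, mul_zero, add_zero]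
    obtain ⟨rfl, rfl | rfl⟩ := eq_of_purchaseTransfer_x_ne_zero hD
    exacts [absurd hfix ha, absurd hfix hb]

theorem eventually_add_smul_purchaseTransfer_mem_Qset
    (hC : ∀ c ∈ C, ValidCompCon Lx Ux Ly Uy c) {p : WPoint V T}
    (hp : p ∈ Qset s0 Ls Us Lx Ux Ly Uy C) {a b : Fin V} (hab : a ≠ b) {t : Fin T}
    (ha : p.x a t ∉ ({0, Lx a t, Ux a t} : Set ℝ)) (hb : p.x b t ∉ ({0, Lx b t, Ux b t} : Set ℝ)) :
    ∀ᶠ ε in 𝓝 (0 : ℝ), p + ε • purchaseTransfer a b t ∈ Qset s0 Ls Us Lx Ux Ly Uy C := by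
  obtain ⟨-, hLa, hUa⟩ := w_eq_one_and_x_mem_Ioo_of_mem_Qset hp ha
  obtain ⟨-, hLb, hUb⟩ := w_eq_one_and_x_mem_Ioo_of_mem_Qset hp hb
  have hta : Tendsto (p.x a t + ·) (𝓝 0) (𝓝 (p.x a t)) :=
    (continuous_const_add _).tendsto' 0 _ (add_zero _)
  have htb : Tendsto (p.x b t - ·) (𝓝 0) (𝓝 (p.x b t)) :=
    (continuous_sub_left _).tendsto' 0 _ (sub_zero _)
  filter_upwards [hta.eventually (Icc_mem_nhds hLa hUa), htb.eventually (Icc_mem_nhds hLb hUb)]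
    with ε hεa hεb
  exact add_smul_purchaseTransfer_mem_Qset hC hp hab ha hb hεa hεb

end

theorem extremePoint_at_most_one_fractional_purchase_of_sales_eq_general {V T : ℕ} (s0 : ℝ)
    (Ls Us : Fin T → ℝ) (Lx Ux Ly Uy : Fin V → Fin T → ℝ)
    (C : Finset (CompCon V T))
    (hC : ∀ c ∈ C, ValidCompCon Lx Ux Ly Uy c)
    (p : WPoint V T)
    (hp : p ∈ Set.extremePoints ℝ (convexHull ℝ (Qset s0 Ls Us Lx Ux Ly Uy C)))
    (t : Fin T) :
    ({ v : Fin V | WPoint.x p v t ∉ ({0, Lx v t, Ux v t} : Set ℝ) }).Subsingleton := by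
  intro a ha b hb
  by_contra hab
  obtain ⟨ε, hε, hadd, hsub⟩ := (eventually_add_smul_purchaseTransfer_mem_Qset hC
    (extremePoints_convexHull_subset hp) hab ha hb).exists_ne_zero_and_neg
  rw [neg_smul, ← sub_eq_add_neg] at hsub
  exact smul_ne_zero hε (purchaseTransfer_ne_zero hab t) <|
    eq_zero_of_add_mem_of_sub_mem_of_mem_extremePoints hp (subset_convexHull ℝ _ hadd)
      (subset_convexHull ℝ _ hsub)

/-- At an extreme point of `P = conv(Q)`, if total sales at time `t` equal
the previous stock level, then at most one vendor's purchase quantity `x*_{v,t}` fails to be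
at zero or at its lower or upper bound. -/
theorem extremePoint_at_most_one_fractional_purchase_of_sales_eq {V T : ℕ} (s0 : ℝ)
    (Ls Us : Fin T → ℝ) (Lx Ux Ly Uy : Fin V → Fin T → ℝ)
    (C : Finset (CompCon V T))
    (hLs : ∀ t, 0 ≤ Ls t) (hsLU : ∀ t, Ls t ≤ Us t)
    (hLx : ∀ v t, 0 ≤ Lx v t) (hxLU : ∀ v t, Lx v t ≤ Ux v t)
    (hLy : ∀ v t, 0 ≤ Ly v t) (hyLU : ∀ v t, Ly v t ≤ Uy v t)
    (hC : ∀ c ∈ C, ValidCompCon Lx Ux Ly Uy c)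
    (p : WPoint V T)
    (hp : p ∈ Set.extremePoints ℝ (convexHull ℝ (Qset s0 Ls Us Lx Ux Ly Uy C)))
    (t : Fin T)
    (heq : ∑ v, WPoint.y p v t = prevStock s0 (WPoint.s p) t) :
    ({ v : Fin V | WPoint.x p v t ∉ ({0, Lx v t, Ux v t} : Set ℝ) }).Subsingleton :=
  extremePoint_at_most_one_fractional_purchase_of_sales_eq_general s0 Ls Us Lx Ux Ly Uy C hC p hp t
end

section
/- Suppose all bounds L^s, U^s, L^x, U^x, L^y, U^y are nonnegative, and let q = (x, y, w, z, s) ∈ Q be a feasible point. Suppose there exist a vendor v₁ ∈ 𝒱 and a time period t₁ ∈ 𝒯 such that: (i) L^x_{v₁,t₁} < x_{v₁,t₁} < U^x_{v₁,t₁}; (ii) L^s_t < s_t < U^s_t for every t ∈ 𝒯 with t ≥ t₁; and (iii) Σ_{v∈𝒱} y_{v,t+1} < s_t for every t with t₁ ≤ t < T. Then q is not an extreme point of P = conv(Q). -/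
open scoped BigOperators

/-!
Move the purchase `x_{v₁,t₁}` and every later stock level `s_t` (`t ≥ t₁`) by the same amount
`e`. The balance equations still hold, and for small `|e|` so do all inequalities: the moved
quantities lie strictly inside their bounds, the later sales stay strictly below the previous
stock, and `w_{v₁,t₁} = 1` because `x_{v₁,t₁} > L^x ≥ 0`. No complementarity constraint is
affected, since `x_{v₁,t₁}` differs from `0` and from both of its bounds and hence is never the
vanishing factor. So `q` is the midpoint of two distinct points of `Q`.
-/

open Filter Topology

theorem notMem_extremePoints_of_eventually_add_smul_mem {E : Type*} [AddCommGroup E]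
    [Module ℝ E] {A : Set E} {x d : E} (hd : d ≠ 0)
    (h : ∀ᶠ e in 𝓝 (0 : ℝ), x + e • d ∈ A) : x ∉ A.extremePoints ℝ := by
  obtain ⟨ε, hε, hA⟩ := Metric.eventually_nhds_iff.1 h
  have hmem : ∀ e : ℝ, |e| < ε → x + e • d ∈ A := fun e he => hA (by simpa using he)
  have hε2 : |ε / 2| < ε := by rw [abs_of_pos (half_pos hε)]; linarith
  intro hx
  have hsub : x - (ε / 2) • d ∈ A := by
    simpa [sub_eq_add_neg, neg_smul] using hmem (-(ε / 2)) (by rwa [abs_neg])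
  have heq := hx.2 hsub (hmem _ hε2) (mem_openSegment_sub_add x _)
  exact smul_ne_zero (half_pos hε).ne' hd (by simpa using heq)

theorem eventually_le_add_mul {a b c : ℝ} (hab : a ≤ b) (hlt : c ≠ 0 → a < b) :
    ∀ᶠ e in 𝓝 (0 : ℝ), a ≤ b + e * c := by
  by_cases hc : c = 0
  · simpa [hc] using hab
  · have hcont : Tendsto (fun e : ℝ => b + e * c) (𝓝 0) (𝓝 b) := by
      simpa using (tendsto_const_nhds.add (tendsto_id.mul_const c) : Tendsto _ (𝓝 (0 : ℝ)) _)
    exact (hcont.eventually_const_lt (hlt hc)).mono fun _ => le_of_lt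

theorem eventually_add_mul_le {a b c : ℝ} (hab : a ≤ b) (hlt : c ≠ 0 → a < b) :
    ∀ᶠ e in 𝓝 (0 : ℝ), a + e * c ≤ b :=
  (eventually_le_add_mul (c := -c) hab fun hc => hlt (neg_ne_zero.1 hc)).mono
    fun e he => by linarith

theorem prevStock_add_smul {T : ℕ} (s0 : ℝ) (s d : Fin T → ℝ) (e : ℝ) (t : Fin T) :
    prevStock s0 (s + e • d) t = prevStock s0 s t + e * prevStock 0 d t := by
  unfold prevStock
  split_ifs <;> simp

theorem indicator_eq_prevStock_add {T : ℕ} (t₁ t : Fin T) :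
    (if t₁ ≤ t then (1 : ℝ) else 0) =
      prevStock 0 (fun t => if t₁ ≤ t then 1 else 0) t + if t = t₁ then 1 else 0 := by
  unfold prevStock
  rcases t with ⟨t, ht⟩; rcases t₁ with ⟨t₁, ht₁⟩
  simp only [Fin.mk_le_mk, Fin.mk.injEq]
  split_ifs <;> first | omega | norm_num

theorem lt_prevStock_of_succ_lt {T : ℕ} (s0 : ℝ) (s : Fin T → ℝ) (a : Fin T → ℝ) (t₁ t : Fin T)
    (h : ∀ t' : Fin T, t₁ ≤ t' → ∀ h : (t' : ℕ) + 1 < T, a ⟨(t' : ℕ) + 1, h⟩ < s t')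
    (ht : prevStock 0 (fun t => if t₁ ≤ t then (1 : ℝ) else 0) t ≠ 0) :
    a t < prevStock s0 s t := by
  unfold prevStock at ht ⊢
  rcases t with ⟨t, htT⟩
  split_ifs at ht ⊢ with h0
  · exact absurd rfl ht
  · have h1 : t₁ ≤ ⟨t - 1, by omega⟩ := by_contra fun h1 => ht (if_neg h1)
    have hsucc : t - 1 + 1 = t := by simp only at h0; omega
    simpa [hsucc] using h _ h1 (by simp only; omega)

namespace WPoint

variable {V T : ℕ} (p d : WPoint V T) (e : ℝ)

@[simp] theorem x_add_smul : (p + e • d).x = p.x + e • d.x := rfl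
@[simp] theorem y_add_smul : (p + e • d).y = p.y + e • d.y := rfl
@[simp] theorem w_add_smul : (p + e • d).w = p.w + e • d.w := rfl
@[simp] theorem z_add_smul : (p + e • d).z = p.z + e • d.z := rfl
@[simp] theorem s_add_smul : (p + e • d).s = p.s + e • d.s := rfl

end WPoint

section PurchaseShift

variable {V T : ℕ}

def purchaseShift (v₁ : Fin V) (t₁ : Fin T) : WPoint V T :=
  (Pi.single v₁ (Pi.single t₁ 1), 0, 0, 0, fun t => if t₁ ≤ t then 1 else 0)

variable (v₁ : Fin V) (t₁ : Fin T)

@[simp] theorem purchaseShift_x : (purchaseShift v₁ t₁).x = Pi.single v₁ (Pi.single t₁ 1) := rfl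
@[simp] theorem purchaseShift_y : (purchaseShift v₁ t₁).y = 0 := rfl
@[simp] theorem purchaseShift_w : (purchaseShift v₁ t₁).w = 0 := rfl
@[simp] theorem purchaseShift_z : (purchaseShift v₁ t₁).z = 0 := rfl
@[simp] theorem purchaseShift_s :
    (purchaseShift v₁ t₁).s = fun t => if t₁ ≤ t then 1 else 0 := rfl

theorem purchaseShift_ne_zero : purchaseShift v₁ t₁ ≠ 0 := fun h => by
  have h₁ := congrFun (congrFun (congrArg WPoint.x h) v₁) t₁
  simp only [purchaseShift_x, Pi.single_eq_same] at h₁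
  exact one_ne_zero h₁

end PurchaseShift

theorem eq_of_purchaseShift_x_ne_zero {V T : ℕ} {v₁ v : Fin V} {t₁ t : Fin T}
    (h : (purchaseShift v₁ t₁).x v t ≠ 0) : v = v₁ ∧ t = t₁ := by
  by_contra hvt
  refine h ?_
  by_cases hv : v = v₁
  · subst hv; simpa [Pi.single_apply] using hvt
  · simp [hv]

theorem WVar.val_add_smul_single_sub_eq_zero {V T : ℕ} {Lx Ux Ly Uy x y : Fin V → Fin T → ℝ}
    {v₁ : Fin V} {t₁ : Fin T} (hLx : 0 ≤ Lx v₁ t₁)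
    (hx : Lx v₁ t₁ < x v₁ t₁ ∧ x v₁ t₁ < Ux v₁ t₁) {u : WVar V T} {B : ℝ}
    (hB : B = 0 ∨ B = u.lb Lx Ly ∨ B = u.ub Ux Uy) (h : u.val x y - B = 0) (e : ℝ) :
    u.val (x + e • (purchaseShift v₁ t₁).x) y - B = 0 := by
  obtain ⟨_ | _, v, t⟩ := u
  · simpa [WVar.val] using h
  · by_cases hvt : v = v₁ ∧ t = t₁
    · obtain ⟨rfl, rfl⟩ := hvt
      simp only [WVar.val, WVar.lb, WVar.ub, if_true] at h hB
      rcases hB with rfl | rfl | rfl <;> linarith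
    · have hzero : (purchaseShift v₁ t₁).x v t = 0 :=
        by_contra fun h => hvt (eq_of_purchaseShift_x_ne_zero h)
      simp only [purchaseShift_x] at hzero
      simpa [WVar.val, hzero] using h

theorem sum_purchaseShift_x {V T : ℕ} (v₁ : Fin V) (t₁ t : Fin T) :
    ∑ v, (purchaseShift v₁ t₁).x v t = if t = t₁ then 1 else 0 := by
  rw [purchaseShift_x, ← Finset.sum_apply, Finset.sum_pi_single']
  simp [Pi.single_apply]

theorem eventually_add_smul_purchaseShift_mem_Qset {V T : ℕ} {s0 : ℝ} {Ls Us : Fin T → ℝ}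
    {Lx Ux Ly Uy : Fin V → Fin T → ℝ} {C : Finset (CompCon V T)}
    (hC : ∀ c ∈ C, ValidCompCon Lx Ux Ly Uy c) {q : WPoint V T}
    (hq : q ∈ Qset s0 Ls Us Lx Ux Ly Uy C) {v₁ : Fin V} {t₁ : Fin T} (hLx : 0 ≤ Lx v₁ t₁)
    (hx1 : Lx v₁ t₁ < q.x v₁ t₁ ∧ q.x v₁ t₁ < Ux v₁ t₁)
    (hstrict : ∀ t, t₁ ≤ t → Ls t < q.s t ∧ q.s t < Us t)
    (hsales : ∀ t : Fin T, t₁ ≤ t → ∀ h : (t : ℕ) + 1 < T,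
      ∑ v, q.y v ⟨(t : ℕ) + 1, h⟩ < q.s t) :
    ∀ᶠ e in 𝓝 (0 : ℝ), q + e • purchaseShift v₁ t₁ ∈ Qset s0 Ls Us Lx Ux Ly Uy C := by
  obtain ⟨hbal, hsb, hsale, hcompl, hyb, hxb, hw01, hz01⟩ := hq
  set d := purchaseShift v₁ t₁ with hd
  have hw : q.w v₁ t₁ = 1 := (hw01 v₁ t₁).resolve_left fun h0 => by
    have := (hxb v₁ t₁).2
    rw [h0, mul_zero] at this
    linarith [hx1.1]
  have hstock : ∀ᶠ e in 𝓝 (0 : ℝ), ∀ t,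
      Ls t ≤ q.s t + e * d.s t ∧ q.s t + e * d.s t ≤ Us t := by
    refine eventually_all.2 fun t => ?_
    have hs_strict : d.s t ≠ 0 → Ls t < q.s t ∧ q.s t < Us t :=
      fun h => hstrict t (by_contra fun ht => h (if_neg ht))
    exact (eventually_le_add_mul (hsb t).1 fun h => (hs_strict h).1).and
      (eventually_add_mul_le (hsb t).2 fun h => (hs_strict h).2)
  have hsold : ∀ᶠ e in 𝓝 (0 : ℝ), ∀ t,
      ∑ v, q.y v t ≤ prevStock s0 q.s t + e * prevStock 0 d.s t :=
    eventually_all.2 fun t => eventually_le_add_mul (hsale t)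
      (lt_prevStock_of_succ_lt s0 q.s (fun t => ∑ v, q.y v t) t₁ t hsales)
  have hbought : ∀ᶠ e in 𝓝 (0 : ℝ), ∀ v t,
      Lx v t * q.w v t ≤ q.x v t + e * d.x v t ∧ q.x v t + e * d.x v t ≤ Ux v t * q.w v t := by
    refine eventually_all.2 fun v => eventually_all.2 fun t => ?_
    have hx_strict : d.x v t ≠ 0 → Lx v t * q.w v t < q.x v t ∧ q.x v t < Ux v t * q.w v t :=
      fun h => by obtain ⟨rfl, rfl⟩ := eq_of_purchaseShift_x_ne_zero h; simpa [hw] using hx1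
    exact (eventually_le_add_mul (hxb v t).1 fun h => (hx_strict h).1).and
      (eventually_add_mul_le (hxb v t).2 fun h => (hx_strict h).2)
  filter_upwards [hstock, hsold, hbought] with e hs hy hx
  clear_value d
  subst hd
  refine ⟨fun t => ?_, by simpa using hs, fun t => ?_, fun c hc => ?_, by simpa using hyb,
    by simpa using hx, by simpa using hw01, by simpa using hz01⟩
  · simp only [WPoint.s_add_smul, WPoint.x_add_smul, WPoint.y_add_smul, Pi.add_apply,
      Pi.smul_apply, smul_eq_mul, prevStock_add_smul, Finset.sum_add_distrib, ← Finset.mul_sum,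
      sum_purchaseShift_x, purchaseShift_y, purchaseShift_s, Pi.zero_apply, mul_zero, add_zero]
    rw [hbal t]
    linear_combination e * indicator_eq_prevStock_add t₁ t
  · simpa [prevStock_add_smul] using hy t
  · obtain ⟨-, hB₁, hB₂⟩ := hC c hc
    simp only [WPoint.x_add_smul, WPoint.y_add_smul, purchaseShift_y, smul_zero, add_zero]
    rcases mul_eq_zero.1 (hcompl c hc) with h | h
    · rw [WVar.val_add_smul_single_sub_eq_zero hLx hx1 hB₁ h, zero_mul]
    · rw [WVar.val_add_smul_single_sub_eq_zero hLx hx1 hB₂ h, mul_zero]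

theorem not_extremePoint_of_strict_general {V T : ℕ} (s0 : ℝ)
    (Ls Us : Fin T → ℝ) (Lx Ux Ly Uy : Fin V → Fin T → ℝ)
    (C : Finset (CompCon V T))
    (hLx : ∀ v t, 0 ≤ Lx v t)
    (hC : ∀ c ∈ C, ValidCompCon Lx Ux Ly Uy c)
    (q : WPoint V T) (hq : q ∈ Qset s0 Ls Us Lx Ux Ly Uy C)
    (v₁ : Fin V) (t₁ : Fin T)
    (hx1 : Lx v₁ t₁ < WPoint.x q v₁ t₁ ∧ WPoint.x q v₁ t₁ < Ux v₁ t₁)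
    (hstrict : ∀ t : Fin T, t₁ ≤ t → Ls t < WPoint.s q t ∧ WPoint.s q t < Us t)
    (hsales : ∀ t : Fin T, t₁ ≤ t → ∀ h : (t : ℕ) + 1 < T,
      ∑ v, WPoint.y q v ⟨(t : ℕ) + 1, h⟩ < WPoint.s q t) :
    q ∉ Set.extremePoints ℝ (convexHull ℝ (Qset s0 Ls Us Lx Ux Ly Uy C)) :=
  notMem_extremePoints_of_eventually_add_smul_mem (purchaseShift_ne_zero v₁ t₁)
    ((eventually_add_smul_purchaseShift_mem_Qset hC hq (hLx v₁ t₁) hx1 hstrict hsales).mono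
      fun _ he => subset_convexHull ℝ _ he)

/-- A feasible point with a purchase quantity `x_{v₁,t₁}` strictly between
its bounds, all later stock levels strictly between their bounds, and all later total sales
strictly below the preceding stock level, is not an extreme point of `P = conv(Q)`. -/
theorem not_extremePoint_of_strict {V T : ℕ} (s0 : ℝ)
    (Ls Us : Fin T → ℝ) (Lx Ux Ly Uy : Fin V → Fin T → ℝ)
    (C : Finset (CompCon V T))
    (hLs : ∀ t, 0 ≤ Ls t) (hsLU : ∀ t, Ls t ≤ Us t)
    (hLx : ∀ v t, 0 ≤ Lx v t) (hxLU : ∀ v t, Lx v t ≤ Ux v t)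
    (hLy : ∀ v t, 0 ≤ Ly v t) (hyLU : ∀ v t, Ly v t ≤ Uy v t)
    (hC : ∀ c ∈ C, ValidCompCon Lx Ux Ly Uy c)
    (q : WPoint V T) (hq : q ∈ Qset s0 Ls Us Lx Ux Ly Uy C)
    (v₁ : Fin V) (t₁ : Fin T)
    (hx1 : Lx v₁ t₁ < WPoint.x q v₁ t₁ ∧ WPoint.x q v₁ t₁ < Ux v₁ t₁)
    (hstrict : ∀ t : Fin T, t₁ ≤ t → Ls t < WPoint.s q t ∧ WPoint.s q t < Us t)
    (hsales : ∀ t : Fin T, t₁ ≤ t → ∀ h : (t : ℕ) + 1 < T,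
      ∑ v, WPoint.y q v ⟨(t : ℕ) + 1, h⟩ < WPoint.s q t) :
    q ∉ Set.extremePoints ℝ (convexHull ℝ (Qset s0 Ls Us Lx Ux Ly Uy C)) :=
  not_extremePoint_of_strict_general s0 Ls Us Lx Ux Ly Uy C hLx hC q hq v₁ t₁ hx1 hstrict hsales
end
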